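/- arXiv:2210.05304 — 6 statements merged into one kernel-verified Lean document; each statement's English description precedes it below -/
import Mathlib

section
/- Let ε > 0 and let T be a stopping time with respect to a filtration (F_i). Suppose (X_i)_{i=0}^∞ is an ε-ranking supermartingale with respect to T, i.e., each X_i is F_i-measurable and nonnegative, and E[X_{i+1} | F_i] ≤ X_i − ε·1_{T>i} almost surely for all i. Then P[T < ∞] = 1. -/
/-!
Taking expectations in the drift condition gives
`E[X (i+1)] ≤ E[X i] - ε P[T > i]`, and telescoping together with `X n ≥ 0` yields
`ε ∑_{i<n} P[T > i] ≤ E[X 0]` for every `n`. Each summand is at least `P[T = ∞]`,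
so `n ε P[T = ∞] ≤ E[X 0]` for all `n`, which forces `P[T = ∞] = 0`.
-/

open MeasureTheory

theorem eq_zero_of_forall_natCast_mul_le {K : Type*} [Field K] [LinearOrder K]
    [IsStrictOrderedRing K] [Archimedean K] {p C : K} (hp : 0 ≤ p)
    (h : ∀ n : ℕ, n * p ≤ C) : p = 0 := by
  by_contra hne
  obtain ⟨n, hn⟩ := exists_nat_gt (C / p)
  rw [div_lt_iff₀ (hp.lt_of_ne' hne)] at hn
  exact (h n).not_gt hn

theorem Finset.sum_range_le_sub_of_le_sub {G : Type*} [AddCommGroup G] [PartialOrder G]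
    [IsOrderedAddMonoid G] {a b : ℕ → G} (h : ∀ i, a (i + 1) ≤ a i - b i) (n : ℕ) :
    ∑ i ∈ Finset.range n, b i ≤ a 0 - a n := by
  rw [← Finset.sum_range_sub']
  exact Finset.sum_le_sum fun i _ => le_sub_comm.mp (h i)

namespace MeasureTheory

variable {Ω : Type*} {m m0 : MeasurableSpace Ω} {μ : Measure Ω}

theorem integral_le_sub_mul_measureReal_of_condExp_le [IsFiniteMeasure μ] (hm : m ≤ m0)
    {f g : Ω → ℝ} (hf : Integrable f μ) {s : Set Ω} (hs : MeasurableSet s) (c : ℝ)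
    (h : μ[g|m] ≤ᵐ[μ] fun ω => f ω - c * s.indicator (fun _ => (1 : ℝ)) ω) :
    ∫ ω, g ω ∂μ ≤ ∫ ω, f ω ∂μ - c * μ.real s := by
  have hind : Integrable (s.indicator fun _ => (1 : ℝ)) μ :=
    (integrable_const 1).indicator hs
  calc ∫ ω, g ω ∂μ = ∫ ω, (μ[g|m]) ω ∂μ := (integral_condExp hm).symm
    _ ≤ ∫ ω, (f ω - c * s.indicator (fun _ => (1 : ℝ)) ω) ∂μ :=
      integral_mono_ae integrable_condExp (hf.sub (hind.const_mul c)) h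
    _ = ∫ ω, f ω ∂μ - c * μ.real s := by
      rw [integral_sub hf (hind.const_mul c), integral_const_mul,
        integral_indicator_const 1 hs, smul_eq_mul, mul_one]

theorem mul_sum_measureReal_lt_le_integral [IsFiniteMeasure μ] {ℱ : Filtration ℕ m0}
    {T : Ω → ℕ∞} (hT : IsStoppingTime ℱ T) {X : ℕ → Ω → ℝ} {ε : ℝ}
    (hint : ∀ i, Integrable (X i) μ) (hnn : ∀ i ω, 0 ≤ X i ω)
    (hdec : ∀ i : ℕ, μ[X (i + 1)|ℱ i] ≤ᵐ[μ]
      fun ω => X i ω - ε * Set.indicator {ω | (i : ℕ∞) < T ω} (fun _ => (1 : ℝ)) ω)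
    (n : ℕ) :
    ε * ∑ i ∈ Finset.range n, μ.real {ω | (i : ℕ∞) < T ω} ≤ ∫ ω, X 0 ω ∂μ := by
  have hstep (i : ℕ) :
      ∫ ω, X (i + 1) ω ∂μ ≤ ∫ ω, X i ω ∂μ - ε * μ.real {ω | (i : ℕ∞) < T ω} :=
    integral_le_sub_mul_measureReal_of_condExp_le (ℱ.le i) (hint i)
      (hT.measurableSpace_le _ (hT.measurableSet_gt' i)) ε (hdec i)
  rw [Finset.mul_sum]
  linarith [Finset.sum_range_le_sub_of_le_sub (a := fun i => ∫ ω, X i ω ∂μ) hstep n,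
    (integral_nonneg (hnn n) : 0 ≤ ∫ ω, X n ω ∂μ)]

end MeasureTheory

theorem stmt1_general {Ω : Type*} {m0 : MeasurableSpace Ω} {μ : Measure Ω} [IsProbabilityMeasure μ]
    {ℱ : Filtration ℕ m0} {T : Ω → ℕ∞}
    (hT : ∀ i : ℕ, MeasurableSet[ℱ i] {ω | T ω ≤ (i : ℕ∞)})
    {X : ℕ → Ω → ℝ} {ε : ℝ} (hε : 0 < ε)
    (hint : ∀ i, Integrable (X i) μ)
    (hnn : ∀ i ω, 0 ≤ X i ω)
    (hdec : ∀ i : ℕ, μ[X (i + 1)|ℱ i] ≤ᵐ[μ]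
      fun ω => X i ω - ε * Set.indicator {ω | (i : ℕ∞) < T ω} (fun _ => (1 : ℝ)) ω) :
    μ {ω | T ω < ⊤} = 1 := by
  have hinf_le (i : ℕ) : μ.real {ω | T ω = ⊤} ≤ μ.real {ω | (i : ℕ∞) < T ω} :=
    measureReal_mono fun ω (hω : T ω = ⊤) => by simp [hω]
  have hbound (n : ℕ) : n * (ε * μ.real {ω | T ω = ⊤}) ≤ ∫ ω, X 0 ω ∂μ := by
    calc n * (ε * μ.real {ω | T ω = ⊤})
        = ε * ∑ _i ∈ Finset.range n, μ.real {ω | T ω = ⊤} := by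
          rw [Finset.sum_const, Finset.card_range, nsmul_eq_mul]; ring
      _ ≤ ε * ∑ i ∈ Finset.range n, μ.real {ω | (i : ℕ∞) < T ω} :=
        mul_le_mul_of_nonneg_left (Finset.sum_le_sum fun i _ => hinf_le i) hε.le
      _ ≤ ∫ ω, X 0 ω ∂μ := mul_sum_measureReal_lt_le_integral hT hint hnn hdec n
  have hinf : μ {ω | T ω = ⊤} = 0 := by
    have := eq_zero_of_forall_natCast_mul_le (by positivity) hbound
    rw [mul_eq_zero, measureReal_eq_zero_iff] at this
    exact this.resolve_left hε.ne'
  have hcompl : {ω | T ω < ⊤}ᶜ = {ω | T ω = ⊤} := by ext ω; simp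
  rw [measure_congr (ae_eq_univ.mpr (hcompl ▸ hinf)), measure_univ]

/-- If `(X_i)` is an `ε`-ranking supermartingale with respect to the stopping time `T`,
then `T` is almost surely finite. -/
theorem stmt1 {Ω : Type*} {m0 : MeasurableSpace Ω} {μ : Measure Ω} [IsProbabilityMeasure μ]
    {ℱ : Filtration ℕ m0} {T : Ω → ℕ∞}
    (hT : ∀ i : ℕ, MeasurableSet[ℱ i] {ω | T ω ≤ (i : ℕ∞)})
    {X : ℕ → Ω → ℝ} {ε : ℝ} (hε : 0 < ε)
    (hadapted : Adapted ℱ X) (hint : ∀ i, Integrable (X i) μ)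
    (hnn : ∀ i ω, 0 ≤ X i ω)
    (hdec : ∀ i : ℕ, μ[X (i + 1)|ℱ i] ≤ᵐ[μ]
      fun ω => X i ω - ε * Set.indicator {ω | (i : ℕ∞) < T ω} (fun _ => (1 : ℝ)) ω) :
    μ {ω | T ω < ⊤} = 1 :=
  stmt1_general hT hε hint hnn hdec
end

section
/- Let ε > 0 and let T be a stopping time with respect to a filtration (F_i). Suppose (X_i)_{i=0}^∞ is an ε-ranking supermartingale with respect to T. Then E[T] ≤ E[X_0] / ε. -/
/-!
Write `E[T] = ∑ᵢ P(T > i)`. Integrating the ranking inequality gives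
`ε · P(T > i) ≤ E[Xᵢ] - E[Xᵢ₊₁]`, so the partial sums telescope to at most
`(E[X₀] - E[Xₙ]) / ε ≤ E[X₀] / ε` by nonnegativity of `Xₙ`.
-/

open MeasureTheory
open scoped ENNReal

lemma ENat.toENNReal_eq_tsum_indicator_lt (a : ℕ∞) :
    (a : ℝ≥0∞) = ∑' n : ℕ, {n : ℕ | (n : ℕ∞) < a}.indicator 1 n := by
  rw [← tsum_subtype]
  simp only [Pi.one_apply, ENNReal.tsum_set_one]
  induction a using ENat.recTopCoe with
  | top => simp [Set.encard_univ]
  | coe m =>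
    have hrange : {n : ℕ | (n : ℕ∞) < m} = (Finset.range m : Set ℕ) := by ext; simp
    rw [hrange, Set.encard_coe_eq_coe_finsetCard]
    simp

lemma MeasureTheory.lintegral_enat_eq_tsum_measure_lt {Ω : Type*} [MeasurableSpace Ω]
    (μ : Measure Ω) {T : Ω → ℕ∞} (hT : ∀ i : ℕ, MeasurableSet {ω | (i : ℕ∞) < T ω}) :
    ∫⁻ ω, (T ω : ℝ≥0∞) ∂μ = ∑' i : ℕ, μ {ω | (i : ℕ∞) < T ω} := by
  have hT_eq : ∀ ω, (T ω : ℝ≥0∞) = ∑' i : ℕ, {ω | (i : ℕ∞) < T ω}.indicator 1 ω := fun ω => by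
    simp only [ENat.toENNReal_eq_tsum_indicator_lt, Set.indicator_apply, Set.mem_ofPred_eq,
      Pi.one_apply]
  rw [lintegral_congr hT_eq,
    lintegral_tsum fun i => (measurable_one.indicator (hT i)).aemeasurable]
  exact tsum_congr fun i => lintegral_indicator_one (hT i)

lemma MeasureTheory.integral_le_of_condExp_le {Ω : Type*} {m m0 : MeasurableSpace Ω}
    {μ : Measure Ω} (hm : m ≤ m0) [SigmaFinite (μ.trim hm)] {f g : Ω → ℝ}
    (hg : Integrable g μ) (hfg : μ[f|m] ≤ᵐ[μ] g) : ∫ ω, f ω ∂μ ≤ ∫ ω, g ω ∂μ := by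
  rw [← integral_condExp hm]
  exact integral_mono_ae integrable_condExp hg hfg

lemma Finset.mul_sum_range_le_of_le_sub {a s : ℕ → ℝ} {ε : ℝ} (ha : ∀ n, 0 ≤ a n)
    (h : ∀ i, a (i + 1) ≤ a i - ε * s i) (n : ℕ) : ε * ∑ i ∈ range n, s i ≤ a 0 := by
  calc ε * ∑ i ∈ range n, s i = ∑ i ∈ range n, ε * s i := mul_sum _ _ _
    _ ≤ ∑ i ∈ range n, (a i - a (i + 1)) := sum_le_sum fun i _ => by linarith [h i]
    _ = a 0 - a n := sum_range_sub' a n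
    _ ≤ a 0 := by linarith [ha n]

theorem stmt2_general {Ω : Type*} {m0 : MeasurableSpace Ω} {μ : Measure Ω} [IsProbabilityMeasure μ]
    {ℱ : Filtration ℕ m0} {T : Ω → ℕ∞}
    (hT : ∀ i : ℕ, MeasurableSet[ℱ i] {ω | T ω ≤ (i : ℕ∞)})
    {X : ℕ → Ω → ℝ} {ε : ℝ} (hε : 0 < ε)
    (hint : ∀ i, Integrable (X i) μ)
    (hnn : ∀ i ω, 0 ≤ X i ω)
    (hdec : ∀ i : ℕ, μ[X (i + 1)|ℱ i] ≤ᵐ[μ]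
      fun ω => X i ω - ε * Set.indicator {ω | (i : ℕ∞) < T ω} (fun _ => (1 : ℝ)) ω) :
    ∫⁻ ω, (T ω : ℝ≥0∞) ∂μ ≤ ENNReal.ofReal ((∫ ω, X 0 ω ∂μ) / ε) := by
  have hlt : ∀ i : ℕ, MeasurableSet {ω | (i : ℕ∞) < T ω} := fun i => by
    simpa only [Set.compl_ofPred, not_le] using (ℱ.le i _ (hT i)).compl
  have hstep : ∀ i : ℕ, ∫ ω, X (i + 1) ω ∂μ ≤
      ∫ ω, X i ω ∂μ - ε * μ.real {ω | (i : ℕ∞) < T ω} := fun i => by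
    have hind := ((integrable_const (μ := μ) (1 : ℝ)).indicator (hlt i)).const_mul ε
    calc ∫ ω, X (i + 1) ω ∂μ
        ≤ ∫ ω, (X i ω - ε * {ω | (i : ℕ∞) < T ω}.indicator (fun _ => (1 : ℝ)) ω) ∂μ :=
          integral_le_of_condExp_le (ℱ.le i) ((hint i).sub hind) (hdec i)
      _ = ∫ ω, X i ω ∂μ - ε * μ.real {ω | (i : ℕ∞) < T ω} := by
          rw [integral_sub (hint i) hind, integral_const_mul]
          exact congrArg (_ - ε * ·) (integral_indicator_one (hlt i))
  have hbound_nonneg : 0 ≤ (∫ ω, X 0 ω ∂μ) / ε := div_nonneg (integral_nonneg (hnn 0)) hε.le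
  rw [lintegral_enat_eq_tsum_measure_lt μ hlt]
  refine ENNReal.tsum_le_of_sum_range_le fun n => ?_
  rw [ENNReal.le_ofReal_iff_toReal_le (ENNReal.sum_ne_top.2 fun i _ => measure_ne_top μ _)
    hbound_nonneg, ENNReal.toReal_sum fun i _ => measure_ne_top μ _, le_div_iff₀' hε]
  exact Finset.mul_sum_range_le_of_le_sub (fun n => integral_nonneg (hnn n)) hstep n

/-- If `(X_i)` is an `ε`-ranking supermartingale with respect to the stopping time `T`,
then `E[T] ≤ E[X_0] / ε`. -/
theorem stmt2 {Ω : Type*} {m0 : MeasurableSpace Ω} {μ : Measure Ω} [IsProbabilityMeasure μ]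
    {ℱ : Filtration ℕ m0} {T : Ω → ℕ∞}
    (hT : ∀ i : ℕ, MeasurableSet[ℱ i] {ω | T ω ≤ (i : ℕ∞)})
    {X : ℕ → Ω → ℝ} {ε : ℝ} (hε : 0 < ε)
    (hadapted : Adapted ℱ X) (hint : ∀ i, Integrable (X i) μ)
    (hnn : ∀ i ω, 0 ≤ X i ω)
    (hdec : ∀ i : ℕ, μ[X (i + 1)|ℱ i] ≤ᵐ[μ]
      fun ω => X i ω - ε * Set.indicator {ω | (i : ℕ∞) < T ω} (fun _ => (1 : ℝ)) ω) :
    ∫⁻ ω, (T ω : ℝ≥0∞) ∂μ ≤ ENNReal.ofReal ((∫ ω, X 0 ω ∂μ) / ε) :=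
  stmt2_general hT hε hint hnn hdec
end

section
/- Let ε > 0 and let T be a stopping time with respect to a filtration (F_i). Suppose (X_i)_{i=0}^∞ is an ε-ranking supermartingale with respect to T. Then for each t ∈ ℕ with t ≥ 1, P[T ≥ t] ≤ E[X_0] / (ε · t). -/
open MeasureTheory

/-!
Integrating the drift condition `E[X_{i+1} | F_i] ≤ X_i - ε·1_{T>i}` gives
`E[X_{i+1}] + ε·P[T > i] ≤ E[X_i]`. Telescoping over `i < t` and using `X_t ≥ 0` yields
`ε · ∑_{i<t} P[T > i] ≤ E[X_0]`, and each of these `t` probabilities is at least `P[T ≥ t]`.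
-/

lemma integral_add_mul_measureReal_le_of_condExp_le {Ω : Type*} {m m0 : MeasurableSpace Ω}
    {μ : Measure Ω} [IsFiniteMeasure μ] (hm : m ≤ m0) {f g : Ω → ℝ} {S : Set Ω} {ε : ℝ}
    (hf : Integrable f μ) (hS : MeasurableSet S)
    (hcond : μ[g|m] ≤ᵐ[μ] fun ω => f ω - ε * S.indicator (fun _ => (1 : ℝ)) ω) :
    ∫ ω, g ω ∂μ + ε * μ.real S ≤ ∫ ω, f ω ∂μ := by
  have hind : Integrable (S.indicator fun _ => (1 : ℝ)) μ :=
    (integrable_const (1 : ℝ)).indicator hS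
  have hmono : ∫ ω, (μ[g|m]) ω ∂μ ≤ ∫ ω, f ω - ε * S.indicator (fun _ => (1 : ℝ)) ω ∂μ :=
    integral_mono_ae integrable_condExp (hf.sub (hind.const_mul ε)) hcond
  rw [integral_condExp hm, integral_sub hf (hind.const_mul ε), integral_const_mul,
    integral_indicator_const _ hS, smul_eq_mul, mul_one] at hmono
  linarith

lemma add_mul_sum_le_of_succ_add_mul_le {a b : ℕ → ℝ} {ε : ℝ} {n : ℕ}
    (hstep : ∀ i < n, a (i + 1) + ε * b i ≤ a i) :
    a n + ε * ∑ i ∈ Finset.range n, b i ≤ a 0 := by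
  have hsum : ∑ i ∈ Finset.range n, ε * b i ≤ ∑ i ∈ Finset.range n, (a i - a (i + 1)) :=
    Finset.sum_le_sum fun i hi => by linarith [hstep i (Finset.mem_range.mp hi)]
  rw [← Finset.mul_sum, Finset.sum_range_sub'] at hsum
  linarith

lemma natCast_mul_measureReal_le_sum_measureReal_lt {Ω : Type*} {m0 : MeasurableSpace Ω}
    (μ : Measure Ω) [IsFiniteMeasure μ] (T : Ω → ℕ∞) (t : ℕ) :
    t * μ.real {ω | (t : ℕ∞) ≤ T ω} ≤ ∑ i ∈ Finset.range t, μ.real {ω | (i : ℕ∞) < T ω} := by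
  have hmono : ∀ i ∈ Finset.range t,
      μ.real {ω | (t : ℕ∞) ≤ T ω} ≤ μ.real {ω | (i : ℕ∞) < T ω} := fun i hi =>
    measureReal_mono fun ω (hω : (t : ℕ∞) ≤ T ω) =>
      lt_of_lt_of_le (by exact_mod_cast Finset.mem_range.mp hi) hω
  simpa using Finset.card_nsmul_le_sum _ _ _ hmono

theorem stmt3_general {Ω : Type*} {m0 : MeasurableSpace Ω} {μ : Measure Ω} [IsProbabilityMeasure μ]
    {ℱ : Filtration ℕ m0} {T : Ω → ℕ∞}
    (hT : ∀ i : ℕ, MeasurableSet[ℱ i] {ω | T ω ≤ (i : ℕ∞)})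
    {X : ℕ → Ω → ℝ} {ε : ℝ} (hε : 0 < ε)
    (hint : ∀ i, Integrable (X i) μ)
    (hnn : ∀ i ω, 0 ≤ X i ω)
    (hdec : ∀ i : ℕ, μ[X (i + 1)|ℱ i] ≤ᵐ[μ]
      fun ω => X i ω - ε * Set.indicator {ω | (i : ℕ∞) < T ω} (fun _ => (1 : ℝ)) ω)
    (t : ℕ) (ht : 1 ≤ t) :
    μ {ω | (t : ℕ∞) ≤ T ω} ≤ ENNReal.ofReal ((∫ ω, X 0 ω ∂μ) / (ε * t)) := by
  have hlt_meas : ∀ i : ℕ, MeasurableSet {ω | (i : ℕ∞) < T ω} := fun i => by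
    simpa only [Set.compl_ofPred, not_le] using (ℱ.le i _ (hT i)).compl
  have htelescope := add_mul_sum_le_of_succ_add_mul_le (a := fun i => ∫ ω, X i ω ∂μ)
    (b := fun i => μ.real {ω | (i : ℕ∞) < T ω}) (n := t) fun i _ =>
    integral_add_mul_measureReal_le_of_condExp_le (ℱ.le i) (hint i) (hlt_meas i) (hdec i)
  have hXt : 0 ≤ ∫ ω, X t ω ∂μ := integral_nonneg (hnn t)
  have hcount := natCast_mul_measureReal_le_sum_measureReal_lt μ T t
  have hεt : 0 < ε * t := mul_pos hε (by exact_mod_cast ht)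
  have hbound : μ.real {ω | (t : ℕ∞) ≤ T ω} ≤ (∫ ω, X 0 ω ∂μ) / (ε * t) := by
    rw [le_div_iff₀ hεt]
    nlinarith [mul_le_mul_of_nonneg_left hcount hε.le]
  rw [← ofReal_measureReal]
  exact ENNReal.ofReal_le_ofReal hbound

/-- If `(X_i)` is an `ε`-ranking supermartingale with respect to the stopping time `T`,
then for each `t ≥ 1`, `P[T ≥ t] ≤ E[X_0] / (ε·t)`. -/
theorem stmt3 {Ω : Type*} {m0 : MeasurableSpace Ω} {μ : Measure Ω} [IsProbabilityMeasure μ]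
    {ℱ : Filtration ℕ m0} {T : Ω → ℕ∞}
    (hT : ∀ i : ℕ, MeasurableSet[ℱ i] {ω | T ω ≤ (i : ℕ∞)})
    {X : ℕ → Ω → ℝ} {ε : ℝ} (hε : 0 < ε)
    (hadapted : Adapted ℱ X) (hint : ∀ i, Integrable (X i) μ)
    (hnn : ∀ i ω, 0 ≤ X i ω)
    (hdec : ∀ i : ℕ, μ[X (i + 1)|ℱ i] ≤ᵐ[μ]
      fun ω => X i ω - ε * Set.indicator {ω | (i : ℕ∞) < T ω} (fun _ => (1 : ℝ)) ω)
    (t : ℕ) (ht : 1 ≤ t) :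
    μ {ω | (t : ℕ∞) ≤ T ω} ≤ ENNReal.ofReal ((∫ ω, X 0 ω ∂μ) / (ε * t)) :=
  stmt3_general hT hε hint hnn hdec t ht
end

section
/- Let (X_i)_{i=0}^∞ be an ε-ranking supermartingale with respect to a stopping time T, for some ε > 0. Then the expected value E[X_0] satisfies E[X_0] ≥ ε · E[T]; in particular, if E[X_0] is finite then T is almost surely finite and integrable. -/
open MeasureTheory Filter
open scoped ENNReal

/-!
Integrating the ranking condition gives `ε · P(T > i) + E[X_{i+1}] ≤ E[X_i]`; telescoping and
`X_n ≥ 0` yield `ε · ∑_{i<n} P(T > i) ≤ E[X_0]` for every `n`, and the tail-sum formula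
`E[T] = ∑_i P(T > i)` turns this into `ε · E[T] ≤ E[X_0]`. Finiteness of `E[T]`, and hence of
`T` almost surely, follows since `ε > 0`.
-/

theorem ENat.toENNReal_eq_tsum_ite (m : ℕ∞) :
    (m : ℝ≥0∞) = ∑' i : ℕ, if (i : ℕ∞) < m then 1 else 0 := by
  induction m using ENat.recTopCoe with
  | top => simp
  | coe n =>
    simp only [Nat.cast_lt]
    rw [tsum_eq_sum (s := Finset.range n) (by simp),
      Finset.sum_congr rfl fun i hi => if_pos (Finset.mem_range.1 hi)]
    simp

theorem Finset.sum_range_le_of_add_le {G : Type*} [AddCommGroup G] [PartialOrder G]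
    [IsOrderedAddMonoid G] {a b : ℕ → G} (h : ∀ i, b i + a (i + 1) ≤ a i) {n : ℕ}
    (hn : 0 ≤ a n) : ∑ i ∈ range n, b i ≤ a 0 :=
  calc ∑ i ∈ range n, b i ≤ ∑ i ∈ range n, (a i - a (i + 1)) :=
        sum_le_sum fun i _ => le_sub_iff_add_le.2 (h i)
    _ = a 0 - a n := sum_range_sub' a n
    _ ≤ a 0 := sub_le_self _ hn

theorem ENNReal.ofReal_mul_tsum_le {f : ℕ → ℝ≥0∞} (hf : ∀ i, f i ≠ ∞) {c C : ℝ} (hc : 0 ≤ c)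
    (h : ∀ n, ∑ i ∈ Finset.range n, c * (f i).toReal ≤ C) :
    ENNReal.ofReal c * ∑' i, f i ≤ ENNReal.ofReal C := by
  rw [← ENNReal.tsum_mul_left]
  refine ENNReal.tsum_le_of_sum_range_le fun n => ?_
  calc ∑ i ∈ Finset.range n, ENNReal.ofReal c * f i
      = ENNReal.ofReal (∑ i ∈ Finset.range n, c * (f i).toReal) := by
        rw [ENNReal.ofReal_sum_of_nonneg fun i _ => by positivity]
        refine Finset.sum_congr rfl fun i _ => ?_
        rw [ENNReal.ofReal_mul hc, ENNReal.ofReal_toReal (hf i)]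
    _ ≤ ENNReal.ofReal C := ENNReal.ofReal_le_ofReal (h n)

namespace MeasureTheory

theorem IsStoppingTime.measurable_enat {Ω : Type*} {m0 : MeasurableSpace Ω}
    {ℱ : Filtration ℕ m0} {T : Ω → ℕ∞} (hT : IsStoppingTime ℱ T) : Measurable T :=
  -- `hT.measurable'` refers to the Borel structure of `WithTop ℕ`, not the discrete one of `ℕ∞`
  (measurable_of_countable (α := WithTop ℕ) (β := ℕ∞) id).comp hT.measurable'

theorem lintegral_enat_eq_tsum_measure_lt_s4 {Ω : Type*} [MeasurableSpace Ω] (μ : Measure Ω)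
    {T : Ω → ℕ∞} (hT : Measurable T) :
    ∫⁻ ω, (T ω : ℝ≥0∞) ∂μ = ∑' i : ℕ, μ {ω | (i : ℕ∞) < T ω} := by
  have hlt (i : ℕ) : MeasurableSet {ω | (i : ℕ∞) < T ω} :=
    hT (.of_discrete : MeasurableSet (Set.Ioi (i : ℕ∞)))
  simp_rw [ENat.toENNReal_eq_tsum_ite]
  rw [lintegral_tsum fun i => (measurable_const.ite (hlt i) measurable_const).aemeasurable]
  refine tsum_congr fun i => ?_
  rw [← lintegral_indicator_one (hlt i)]
  simp only [Set.indicator_apply, Set.mem_ofPred_eq, Pi.one_apply]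

theorem integral_add_integral_le_of_condExp_le_sub {Ω : Type*} {m m0 : MeasurableSpace Ω}
    {μ : Measure Ω} (hm : m ≤ m0) [SigmaFinite (μ.trim hm)] {X Y Z : Ω → ℝ} (hX : Integrable X μ)
    (hZ : Integrable Z μ) (h : μ[Y|m] ≤ᵐ[μ] X - Z) :
    ∫ ω, Z ω ∂μ + ∫ ω, Y ω ∂μ ≤ ∫ ω, X ω ∂μ := by
  have := integral_mono_ae integrable_condExp (hX.sub hZ) h
  rw [integral_condExp hm, integral_sub' hX hZ] at this
  linarith

end MeasureTheory

theorem stmt4_general {Ω : Type*} {m0 : MeasurableSpace Ω} {μ : Measure Ω} [IsProbabilityMeasure μ]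
    {ℱ : Filtration ℕ m0} {T : Ω → ℕ∞}
    (hT : ∀ i : ℕ, MeasurableSet[ℱ i] {ω | T ω ≤ (i : ℕ∞)})
    {X : ℕ → Ω → ℝ} {ε : ℝ} (hε : 0 < ε)
    (hint : ∀ i, Integrable (X i) μ)
    (hnn : ∀ i ω, 0 ≤ X i ω)
    (hdec : ∀ i : ℕ, μ[X (i + 1)|ℱ i] ≤ᵐ[μ]
      fun ω => X i ω - ε * Set.indicator {ω | (i : ℕ∞) < T ω} (fun _ => (1 : ℝ)) ω) :
    ENNReal.ofReal ε * ∫⁻ ω, (T ω : ℝ≥0∞) ∂μ ≤ ENNReal.ofReal (∫ ω, X 0 ω ∂μ) ∧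
      μ {ω | T ω < ⊤} = 1 ∧ ∫⁻ ω, (T ω : ℝ≥0∞) ∂μ < ⊤ := by
  have hTm : Measurable T := IsStoppingTime.measurable_enat hT
  have hlt (i : ℕ) : MeasurableSet {ω | (i : ℕ∞) < T ω} :=
    hTm (.of_discrete : MeasurableSet (Set.Ioi (i : ℕ∞)))
  have hstep (i : ℕ) :
      ε * μ.real {ω | (i : ℕ∞) < T ω} + ∫ ω, X (i + 1) ω ∂μ ≤ ∫ ω, X i ω ∂μ := by
    have := integral_add_integral_le_of_condExp_le_sub (ℱ.le i) (hint i)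
      (((integrable_const (1 : ℝ)).indicator (hlt i)).const_mul ε) (hdec i)
    rwa [integral_const_mul, integral_indicator_const _ (hlt i), smul_eq_mul, mul_one] at this
  have hbound : ENNReal.ofReal ε * ∫⁻ ω, (T ω : ℝ≥0∞) ∂μ ≤ ENNReal.ofReal (∫ ω, X 0 ω ∂μ) := by
    rw [lintegral_enat_eq_tsum_measure_lt_s4 μ hTm]
    exact ENNReal.ofReal_mul_tsum_le (fun i => measure_ne_top μ _) hε.le fun n =>
      Finset.sum_range_le_of_add_le (a := fun i => ∫ ω, X i ω ∂μ) hstep (integral_nonneg (hnn n))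
  have hfin : ∫⁻ ω, (T ω : ℝ≥0∞) ∂μ < ⊤ :=
    ENNReal.lt_top_of_mul_ne_top_right (ne_top_of_le_ne_top ENNReal.ofReal_ne_top hbound)
      (ENNReal.ofReal_pos.2 hε).ne'
  refine ⟨hbound, ?_, hfin⟩
  have hae : ∀ᵐ ω ∂μ, T ω < ⊤ := by
    filter_upwards [ae_lt_top (by fun_prop) hfin.ne] with ω hω
    exact ENat.toENNReal_lt_top.1 hω
  rw [← measure_univ (μ := μ)]
  have hfinite : MeasurableSet {ω | T ω < ⊤} := hTm (.of_discrete : MeasurableSet (Set.Iio ⊤))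
  exact (ae_iff_measure_eq hfinite.nullMeasurableSet).1 hae

/-- If `(X_i)` is an `ε`-ranking supermartingale with respect to the stopping time `T`, then
`E[X_0] ≥ ε · E[T]`; in particular (`E[X_0]` being finite), `T` is almost surely finite
and integrable. -/
theorem stmt4 {Ω : Type*} {m0 : MeasurableSpace Ω} {μ : Measure Ω} [IsProbabilityMeasure μ]
    {ℱ : Filtration ℕ m0} {T : Ω → ℕ∞}
    (hT : ∀ i : ℕ, MeasurableSet[ℱ i] {ω | T ω ≤ (i : ℕ∞)})
    {X : ℕ → Ω → ℝ} {ε : ℝ} (hε : 0 < ε)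
    (hadapted : Adapted ℱ X) (hint : ∀ i, Integrable (X i) μ)
    (hnn : ∀ i ω, 0 ≤ X i ω)
    (hdec : ∀ i : ℕ, μ[X (i + 1)|ℱ i] ≤ᵐ[μ]
      fun ω => X i ω - ε * Set.indicator {ω | (i : ℕ∞) < T ω} (fun _ => (1 : ℝ)) ω) :
    ENNReal.ofReal ε * ∫⁻ ω, (T ω : ℝ≥0∞) ∂μ ≤ ENNReal.ofReal (∫ ω, X 0 ω ∂μ) ∧
      μ {ω | T ω < ⊤} = 1 ∧ ∫⁻ ω, (T ω : ℝ≥0∞) ∂μ < ⊤ :=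
  stmt4_general hT hε hint hnn hdec
end

section
/- Let p ∈ [0, 1) and consider a Markov chain on a state space X with a measurable set S ⊆ G ⊆ X such that (a) from every state, the chain reaches S with probability 1, and (b) from every state in S, the probability of ever leaving G is at most p. Then with probability 1, the chain eventually enters S and never leaves G afterwards; i.e., the chain satisfies the persistence property 'eventually always in G' almost surely. -/
/-!
Let `c` be the supremum, over all initial states, of the probability that the chain is outside
`G` at infinitely many times. Started in `S`, the chain must first leave `G`, which happens with
probability at most `p`, and by the strong Markov property at that exit time the probability of
infinitely many visits outside `G` is at most `c * p`. Started anywhere, the chain hits `S` almost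
surely, and the strong Markov property at the hitting time bounds the same probability by
`c * p` again. Hence `c ≤ c * p` with `p < 1`, so `c = 0`.

The strong Markov property at these hitting times is obtained by splitting according to the
value `s` of the hitting time: the chain after time `s` is the chain started at its state at
time `s` and driven by the shifted noise, which is independent of the first `s` noises and has
the same law as the whole noise sequence.
-/

open MeasureTheory Filter
open scoped ENNReal

/-- Trajectory of a time-homogeneous Markov chain generated by the measurable step function
`step` driven by the i.i.d. noise sequence `W`. -/
def traj {Xsp Nsp Ω : Type*} (step : Xsp → Nsp → Xsp) (W : ℕ → Ω → Nsp) (x0 : Xsp) (ω : Ω) :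
    ℕ → Xsp
  | 0 => x0
  | t + 1 => step (traj step W x0 ω t) (W t ω)

open ProbabilityTheory Set

section MarkovChain

variable {α β Ω : Type*}

section Trajectory

variable (step : α → β → α) (W : ℕ → Ω → β) (G : Set α) (x : α) (ω : Ω)

lemma traj_add (s : ℕ) :
    ∀ t, traj step W x ω (s + t) = traj step (fun k => W (s + k)) (traj step W x ω s) ω t
  | 0 => rfl
  | t + 1 => by rw [← Nat.add_assoc, traj, traj, traj_add s t]

lemma traj_eq_traj_seq :
    ∀ t, traj step W x ω t = traj step (fun k w => w k) x (fun k => W k ω) t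
  | 0 => rfl
  | t + 1 => by rw [traj, traj, traj_eq_traj_seq t]

def frequentlyOutside : Set Ω :=
  {ω | ∃ᶠ t in atTop, traj step W x ω t ∉ G}

lemma frequentlyOutside_eq_preimage_seq :
    frequentlyOutside step W G x
      = (fun ω k => W k ω) ⁻¹' frequentlyOutside step (fun k w => w k) G x := by
  ext ω
  simp only [frequentlyOutside, mem_preimage, mem_ofPred_eq, traj_eq_traj_seq step W x ω]

lemma mem_frequentlyOutside_iff_shift (s : ℕ) :
    ω ∈ frequentlyOutside step W G x
      ↔ ω ∈ frequentlyOutside step (fun k => W (s + k)) G (traj step W x ω s) := by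
  simp only [frequentlyOutside, mem_ofPred_eq, ← traj_add]
  conv_lhs => rw [← map_add_atTop_eq_nat s, frequently_map]
  simp only [Nat.add_comm]

lemma frequentlyOutside_subset_hit :
    frequentlyOutside step W G x ⊆ {ω | ∃ t, traj step W x ω t ∈ Gᶜ} :=
  fun _ h => h.exists

lemma setOf_eventually_mem_eq_compl_frequentlyOutside :
    {ω | ∃ N, ∀ t ≥ N, traj step W x ω t ∈ G} = (frequentlyOutside step W G x)ᶜ := by
  ext ω
  simp [frequentlyOutside, Filter.not_frequently, eventually_atTop]

end Trajectory

section Measurability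

variable [MeasurableSpace α] [MeasurableSpace β] {m : MeasurableSpace Ω}
  {step : α → β → α} {W : ℕ → Ω → β} {G : Set α}

lemma measurable_traj (hstep : Measurable (Function.uncurry step)) {x : Ω → α}
    (hx : Measurable x) : ∀ {t}, (∀ i < t, Measurable (W i)) →
      Measurable fun ω => traj step W (x ω) ω t
  | 0, _ => hx
  | t + 1, hW => hstep.comp <|
      (measurable_traj hstep hx fun i hi => hW i (by omega)).prodMk (hW t t.lt_succ_self)

lemma measurableSet_setOf_exists_traj_mem (hstep : Measurable (Function.uncurry step))
    (hW : ∀ i, Measurable (W i)) {T : Set α} (hT : MeasurableSet T) (x : α) :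
    MeasurableSet {ω | ∃ t, traj step W x ω t ∈ T} := by
  rw [ofPred_exists]
  exact .iUnion fun t => measurable_traj hstep measurable_const (fun i _ => hW i) hT

lemma measurableSet_setOf_frequently_notMem {f : ℕ → Ω → α} (hf : ∀ t, Measurable (f t))
    (hG : MeasurableSet G) : MeasurableSet {ω | ∃ᶠ t in atTop, f t ω ∉ G} := by
  have h : {ω | ∃ᶠ t in atTop, f t ω ∉ G} = ⋂ N, ⋃ t ≥ N, f t ⁻¹' Gᶜ := by
    ext ω
    simp [frequently_atTop]
  rw [h]
  exact .iInter fun _ => .biUnion (to_countable _) fun t _ => (hf t) hG.compl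

lemma measurableSet_frequentlyOutside_seq (hstep : Measurable (Function.uncurry step))
    (hG : MeasurableSet G) :
    MeasurableSet {q : α × (ℕ → β) | q.2 ∈ frequentlyOutside step (fun k w => w k) G q.1} := by
  have h := measurableSet_setOf_frequently_notMem (fun t => measurable_traj
    (W := fun k (q : α × (ℕ → β)) => q.2 k) hstep measurable_fst (t := t)
    fun i _ => (measurable_pi_apply i).comp measurable_snd) hG
  simp only [traj_eq_traj_seq step (fun k (q : α × (ℕ → β)) => q.2 k)] at h
  exact h

lemma measurableSet_frequentlyOutside (hstep : Measurable (Function.uncurry step))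
    (hW : ∀ i, Measurable (W i)) (hG : MeasurableSet G) (x : α) :
    MeasurableSet (frequentlyOutside step W G x) := by
  rw [frequentlyOutside_eq_preimage_seq]
  exact measurable_pi_lambda _ hW
    (measurable_prodMk_left (measurableSet_frequentlyOutside_seq hstep hG))

end Measurability

section Independence

variable [MeasurableSpace α] [MeasurableSpace β] {m mΩ : MeasurableSpace Ω}
  {μ : Measure Ω}

lemma ProbabilityTheory.Indep.map_prodMk_restrict [IsFiniteMeasure μ] {X : Ω → α} {Y : Ω → β}
    (hind : Indep m (MeasurableSpace.comap Y inferInstance) μ) (hm : m ≤ mΩ)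
    (hX : Measurable[m] X) (hY : Measurable Y) {E : Set Ω}
    (hE : MeasurableSet[m] E) :
    (μ.restrict E).map (fun ω => (X ω, Y ω)) = ((μ.restrict E).map X).prod (μ.map Y) := by
  have hX' : Measurable X := hX.mono hm le_rfl
  refine (Measure.prod_eq fun A B hA hB => ?_).symm
  rw [Measure.map_apply (hX'.prodMk hY) (hA.prod hB), Measure.map_apply hX' hA,
    Measure.map_apply hY hB, Measure.restrict_apply (hX'.prodMk hY (hA.prod hB)),
    Measure.restrict_apply (hX' hA), mk_preimage_prod, inter_right_comm]
  exact (Indep_iff _ _ μ).mp hind _ _ ((hX hA).inter hE) ⟨B, hB, rfl⟩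

lemma ProbabilityTheory.Indep.measure_inter_preimage_eq_setLIntegral [IsFiniteMeasure μ]
    {X : Ω → α} {Y : Ω → β} (hind : Indep m (MeasurableSpace.comap Y inferInstance) μ) (hm : m ≤ mΩ)
    (hX : Measurable[m] X) (hY : Measurable Y) {E : Set Ω}
    (hE : MeasurableSet[m] E) {C : Set (α × β)} (hC : MeasurableSet C) :
    μ (E ∩ (fun ω => (X ω, Y ω)) ⁻¹' C) = ∫⁻ ω in E, μ.map Y (Prod.mk (X ω) ⁻¹' C) ∂μ := by
  have hX' : Measurable X := hX.mono hm le_rfl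
  rw [inter_comm, ← Measure.restrict_apply (hX'.prodMk hY hC),
    ← Measure.map_apply (hX'.prodMk hY) hC, hind.map_prodMk_restrict hm hX hY hE,
    Measure.prod_apply hC, lintegral_map (measurable_measure_prodMk_left hC) hX']

end Independence

abbrev pastMeasurableSpace [MeasurableSpace β] (W : ℕ → Ω → β) (s : ℕ) : MeasurableSpace Ω :=
  ⨆ i ∈ Iio s, MeasurableSpace.comap (W i) inferInstance

section Noise

variable [MeasurableSpace β] {mΩ : MeasurableSpace Ω} {μ : Measure Ω} {W : ℕ → Ω → β}

lemma pastMeasurableSpace_le (hW : ∀ i, Measurable (W i)) (s : ℕ) :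
    pastMeasurableSpace W s ≤ mΩ :=
  iSup₂_le fun i _ => (hW i).comap_le

lemma measurable_pastMeasurableSpace {s i : ℕ} (hi : i < s) :
    Measurable[pastMeasurableSpace W s] (W i) :=
  Measurable.of_comap_le (le_iSup₂
    (f := fun j (_ : j ∈ Iio s) => MeasurableSpace.comap (W j) inferInstance) i hi)

lemma ProbabilityTheory.iIndepFun.indep_pastMeasurableSpace_shift (hind : iIndepFun W μ)
    (hW : ∀ i, Measurable (W i)) (s : ℕ) :
    Indep (pastMeasurableSpace W s)
      (MeasurableSpace.comap (fun ω k => W (s + k) ω) inferInstance) μ := by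
  have h := indep_iSup_of_disjoint (fun i => (hW i).comap_le)
    ((iIndepFun_iff_iIndep _ _ _).mp hind) (Iio_disjoint_Ici (a := s) le_rfl)
  refine indep_of_indep_of_le_right h (Measurable.comap_le ?_)
  refine @measurable_pi_lambda Ω ℕ (fun _ => β) (⨆ i ∈ Ici s, _) _ _ fun k => ?_
  exact Measurable.of_comap_le (le_iSup₂
    (f := fun j (_ : j ∈ Ici s) => MeasurableSpace.comap (W j) inferInstance) (s + k)
    (Nat.le_add_right s k))

lemma ProbabilityTheory.iIndepFun.map_shift_eq_map (hind : iIndepFun W μ)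
    (hW : ∀ i, Measurable (W i)) {d : Measure β} (hlaw : ∀ i, μ.map (W i) = d) (s : ℕ) :
    μ.map (fun ω k => W (s + k) ω) = μ.map (fun ω k => W k ω) := by
  have := hind.isProbabilityMeasure
  rw [(hind.precomp (add_right_injective s)).map_fun_eq_infinitePi_map fun k => hW (s + k),
    hind.map_fun_eq_infinitePi_map hW]
  congr with k : 1
  simp only [hlaw]

end Noise

section MarkovProperty

variable [MeasurableSpace α] [MeasurableSpace β] {mΩ : MeasurableSpace Ω} {μ : Measure Ω}
  [IsProbabilityMeasure μ] {step : α → β → α} {W : ℕ → Ω → β} {d : Measure β} {G : Set α}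

lemma measure_inter_frequentlyOutside_le (hstep : Measurable (Function.uncurry step))
    (hG : MeasurableSet G) (hW : ∀ i, Measurable (W i)) (hlaw : ∀ i, μ.map (W i) = d)
    (hind : iIndepFun W μ) (x : α) (s : ℕ) {A : Set Ω}
    (hA : MeasurableSet[pastMeasurableSpace W s] A) {b : ℝ≥0∞}
    (hb : ∀ ω ∈ A, μ (frequentlyOutside step W G (traj step W x ω s)) ≤ b) :
    μ (A ∩ frequentlyOutside step W G x) ≤ b * μ A := by
  set C := {q : α × (ℕ → β) | q.2 ∈ frequentlyOutside step (fun k w => w k) G q.1}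
  have hC : MeasurableSet C := measurableSet_frequentlyOutside_seq hstep hG
  have hF : frequentlyOutside step W G x
      = (fun ω => (traj step W x ω s, fun k => W (s + k) ω)) ⁻¹' C := by
    ext ω
    rw [mem_frequentlyOutside_iff_shift step W G x ω s, frequentlyOutside_eq_preimage_seq]
    rfl
  have hslice : ∀ z, μ.map (fun ω k => W (s + k) ω) (Prod.mk z ⁻¹' C)
      = μ (frequentlyOutside step W G z) := fun z => by
    rw [hind.map_shift_eq_map hW hlaw s,
      Measure.map_apply (measurable_pi_lambda _ hW) (measurable_prodMk_left hC),
      frequentlyOutside_eq_preimage_seq]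
    rfl
  have hpast := pastMeasurableSpace_le hW s
  calc μ (A ∩ frequentlyOutside step W G x)
      = ∫⁻ ω in A, μ (frequentlyOutside step W G (traj step W x ω s)) ∂μ := by
        rw [hF, (hind.indep_pastMeasurableSpace_shift hW s).measure_inter_preimage_eq_setLIntegral
          hpast
          (measurable_traj hstep measurable_const fun _ hi => measurable_pastMeasurableSpace hi)
          (measurable_pi_lambda _ fun k => hW (s + k)) hA hC]
        simp only [hslice]
    _ ≤ ∫⁻ _ in A, b ∂μ := setLIntegral_mono' (hpast _ hA) hb
    _ = b * μ A := setLIntegral_const A b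

lemma measure_frequentlyOutside_inter_hit_le (hstep : Measurable (Function.uncurry step))
    (hG : MeasurableSet G) (hW : ∀ i, Measurable (W i)) (hlaw : ∀ i, μ.map (W i) = d)
    (hind : iIndepFun W μ) {T : Set α} (hT : MeasurableSet T) {b : ℝ≥0∞}
    (hb : ∀ z ∈ T, μ (frequentlyOutside step W G z) ≤ b) (x : α) :
    μ (frequentlyOutside step W G x ∩ {ω | ∃ t, traj step W x ω t ∈ T})
      ≤ b * μ {ω | ∃ t, traj step W x ω t ∈ T} := by
  set H : ℕ → Set Ω := fun t => {ω | traj step W x ω t ∈ T}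
  have hH : ∀ s, ∀ t ≤ s, MeasurableSet[pastMeasurableSpace W s] (H t) := fun s t hts =>
    measurable_traj hstep measurable_const
      (fun i hi => measurable_pastMeasurableSpace (by omega)) hT
  have hD : ∀ s, MeasurableSet[pastMeasurableSpace W s] (disjointed H s) := fun s => by
    rw [disjointed_eq_inter_compl]
    exact (hH s s le_rfl).inter
      (.biInter (to_countable _) fun t ht => (hH s t (le_of_lt ht)).compl)
  have hhit : {ω | ∃ t, traj step W x ω t ∈ T} = ⋃ s, disjointed H s := by
    rw [iUnion_disjointed]
    ext ω
    simp [H]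
  rw [hhit, inter_iUnion, measure_iUnion (disjoint_disjointed H)
    fun s => pastMeasurableSpace_le hW s _ (hD s), ← ENNReal.tsum_mul_left]
  refine (measure_iUnion_le _).trans (ENNReal.tsum_le_tsum fun s => ?_)
  rw [inter_comm]
  exact measure_inter_frequentlyOutside_le hstep hG hW hlaw hind x s (hD s)
    fun ω hω => hb _ (disjointed_le H s hω)

end MarkovProperty

lemma ENNReal.eq_zero_of_le_mul_of_lt_one {c q : ℝ≥0∞} (hc : c ≠ ∞) (hq : q < 1)
    (h : c ≤ c * q) : c = 0 := by
  by_contra hc0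
  have hlt := ENNReal.mul_lt_mul_left hc0 hc hq
  rw [one_mul, mul_comm] at hlt
  exact (h.trans_lt hlt).false

end MarkovChain

theorem stmt5_general {Xsp Nsp Ω : Type*} [MeasurableSpace Xsp] [MeasurableSpace Nsp]
    [MeasurableSpace Ω]
    (μ : Measure Ω) [IsProbabilityMeasure μ] (d : Measure Nsp)
    (W : ℕ → Ω → Nsp) (hWmeas : ∀ t, Measurable (W t))
    (hWlaw : ∀ t, Measure.map (W t) μ = d)
    (hWindep : ProbabilityTheory.iIndepFun W μ)
    (step : Xsp → Nsp → Xsp) (hstep : Measurable (Function.uncurry step))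
    (S G : Set Xsp) (hS : MeasurableSet S) (hG : MeasurableSet G)
    (p : ℝ) (hp1 : p < 1)
    (hreach : ∀ x : Xsp, μ {ω | ∃ t, traj step W x ω t ∈ S} = 1)
    (hleave : ∀ x ∈ S, μ {ω | ∃ t, traj step W x ω t ∉ G} ≤ ENNReal.ofReal p) :
    ∀ x : Xsp, μ {ω | ∃ N, ∀ t ≥ N, traj step W x ω t ∈ G} = 1 := by
  intro x
  set F := frequentlyOutside step W G
  set c := ⨆ y, μ (F y)
  have hF_le : ∀ y, μ (F y) ≤ c := le_iSup (fun y => μ (F y))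
  have hS_le : ∀ y ∈ S, μ (F y) ≤ c * ENNReal.ofReal p := fun y hy =>
    calc μ (F y) = μ (F y ∩ {ω | ∃ t, traj step W y ω t ∈ Gᶜ}) := by
          rw [inter_eq_left.mpr (frequentlyOutside_subset_hit step W G y)]
      _ ≤ c * μ {ω | ∃ t, traj step W y ω t ∈ Gᶜ} :=
          measure_frequentlyOutside_inter_hit_le hstep hG hWmeas hWlaw hWindep hG.compl
            (fun z _ => hF_le z) y
      _ ≤ c * ENNReal.ofReal p := by gcongr; exact hleave y hy
  have hc_le : c ≤ c * ENNReal.ofReal p := iSup_le fun y =>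
    calc μ (F y) = μ (F y ∩ {ω | ∃ t, traj step W y ω t ∈ S}) :=
          (measure_inter_conull ((prob_compl_eq_zero_iff
            (measurableSet_setOf_exists_traj_mem hstep hWmeas hS y)).mpr (hreach y))).symm
      _ ≤ c * ENNReal.ofReal p := by
          simpa only [hreach y, mul_one] using
            measure_frequentlyOutside_inter_hit_le hstep hG hWmeas hWlaw hWindep hS hS_le y
  have hc : c = 0 := ENNReal.eq_zero_of_le_mul_of_lt_one
    (ne_top_of_le_ne_top ENNReal.one_ne_top (iSup_le fun _ => prob_le_one))
    (ENNReal.ofReal_lt_one.mpr hp1) hc_le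
  rw [setOf_eventually_mem_eq_compl_frequentlyOutside,
    prob_compl_eq_one_iff (measurableSet_frequentlyOutside hstep hWmeas hG x)]
  exact nonpos_iff_eq_zero.mp (hc ▸ hF_le x)

/-- If from every state the chain reaches `S ⊆ G` with probability 1, and from every state of
`S` it ever leaves `G` with probability at most `p < 1`, then from every initial state the
chain is eventually always in `G` almost surely. -/
theorem stmt5 {Xsp Nsp Ω : Type*} [MeasurableSpace Xsp] [MeasurableSpace Nsp]
    [MeasurableSpace Ω]
    (μ : Measure Ω) [IsProbabilityMeasure μ] (d : Measure Nsp) [IsProbabilityMeasure d]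
    (W : ℕ → Ω → Nsp) (hWmeas : ∀ t, Measurable (W t))
    (hWlaw : ∀ t, Measure.map (W t) μ = d)
    (hWindep : ProbabilityTheory.iIndepFun W μ)
    (step : Xsp → Nsp → Xsp) (hstep : Measurable (Function.uncurry step))
    (S G : Set Xsp) (hS : MeasurableSet S) (hG : MeasurableSet G) (hSG : S ⊆ G)
    (p : ℝ) (hp0 : 0 ≤ p) (hp1 : p < 1)
    (hreach : ∀ x : Xsp, μ {ω | ∃ t, traj step W x ω t ∈ S} = 1)
    (hleave : ∀ x ∈ S, μ {ω | ∃ t, traj step W x ω t ∉ G} ≤ ENNReal.ofReal p) :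
    ∀ x : Xsp, μ {ω | ∃ N, ∀ t ≥ N, traj step W x ω t ∈ G} = 1 :=
  stmt5_general μ d W hWmeas hWlaw hWindep step hstep S G hS hG p hp1 hreach hleave
end

section
/- Let X̃ be a τ-discretization of a set X ⊆ ℝ^n (i.e., for every x ∈ X there exists x̃ ∈ X̃ with ||x − x̃||_1 ≤ τ), and let V, π, f be Lipschitz with constants L_V, L_π, L_f, K = L_V·(L_f·(L_π + 1) + 1). Suppose for every x̃ ∈ X̃ with the property that some x ∈ X in the τ-ball around x̃ has V(x) ≥ M, the strict inequality E_{ω~d}[V(f(x̃, π(x̃), ω))] < V(x̃) − τ·K holds. Then for every x ∈ X with V(x) ≥ M, E_{ω~d}[V(f(x, π(x), ω))] < V(x). -/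
/-!
Move from `x` to a grid point `x̃` at ℓ1 distance at most `τ`. The closed-loop successor
`f(·, π(·), ω)` is `L_f (L_π + 1)`-Lipschitz for every `ω`, so the expected value of `V` after one
step changes by at most `τ L_V L_f (L_π + 1)`, and `V` itself by at most `τ L_V`; together these
are exactly the margin `τ K` demanded by the check at `x̃`.
-/

open Finset MeasureTheory

noncomputable def l1norm {n : ℕ} (x : Fin n → ℝ) : ℝ := ∑ i, |x i|

lemma l1norm_nonneg {n : ℕ} (x : Fin n → ℝ) : 0 ≤ l1norm x :=
  Finset.sum_nonneg fun _ _ => abs_nonneg _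

lemma l1norm_sub_comm {n : ℕ} (x y : Fin n → ℝ) : l1norm (x - y) = l1norm (y - x) := by
  simp only [l1norm, Pi.sub_apply, abs_sub_comm]

lemma integral_le_integral_add_const {Ω : Type*} [MeasurableSpace Ω] {μ : Measure Ω}
    [IsProbabilityMeasure μ] {g h : Ω → ℝ} (hg : Integrable g μ) (hh : Integrable h μ) {c : ℝ}
    (hle : ∀ ω, g ω ≤ h ω + c) : ∫ ω, g ω ∂μ ≤ ∫ ω, h ω ∂μ + c := by
  calc ∫ ω, g ω ∂μ ≤ ∫ ω, h ω + c ∂μ := integral_mono hg (hh.add (integrable_const c)) hle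
    _ = ∫ ω, h ω ∂μ + c := by simp [integral_add hh (integrable_const c)]

section ClosedLoop

variable {n m : ℕ} {Ω : Type*} {f : (Fin n → ℝ) → (Fin m → ℝ) → Ω → (Fin n → ℝ)}
  {π : (Fin n → ℝ) → (Fin m → ℝ)} {V : (Fin n → ℝ) → ℝ} {Lf Lπ LV : ℝ}

lemma l1norm_closedLoop_sub_le (hLf : 0 ≤ Lf)
    (hflip : ∀ a b u v, ∀ ω : Ω,
      l1norm (f a u ω - f b v ω) ≤ Lf * (l1norm (a - b) + l1norm (u - v)))
    (hπlip : ∀ a b, l1norm (π a - π b) ≤ Lπ * l1norm (a - b)) (a b : Fin n → ℝ) (ω : Ω) :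
    l1norm (f a (π a) ω - f b (π b) ω) ≤ Lf * (Lπ + 1) * l1norm (a - b) :=
  calc l1norm (f a (π a) ω - f b (π b) ω)
      ≤ Lf * (l1norm (a - b) + l1norm (π a - π b)) := hflip a b (π a) (π b) ω
    _ ≤ Lf * (l1norm (a - b) + Lπ * l1norm (a - b)) := by gcongr; exact hπlip a b
    _ = Lf * (Lπ + 1) * l1norm (a - b) := by ring

lemma integral_closedLoop_le [MeasurableSpace Ω] (d : Measure Ω) [IsProbabilityMeasure d]
    (hLf : 0 ≤ Lf) (hLV : 0 ≤ LV)
    (hVlip : ∀ a b, |V a - V b| ≤ LV * l1norm (a - b))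
    (hflip : ∀ a b u v, ∀ ω : Ω,
      l1norm (f a u ω - f b v ω) ≤ Lf * (l1norm (a - b) + l1norm (u - v)))
    (hπlip : ∀ a b, l1norm (π a - π b) ≤ Lπ * l1norm (a - b))
    (hint : ∀ x : Fin n → ℝ, Integrable (fun ω => V (f x (π x) ω)) d) (a b : Fin n → ℝ) :
    ∫ ω, V (f a (π a) ω) ∂d ≤ ∫ ω, V (f b (π b) ω) ∂d + LV * (Lf * (Lπ + 1)) * l1norm (a - b) := by
  refine integral_le_integral_add_const (hint a) (hint b) fun ω => ?_
  have hV := (abs_sub_le_iff.mp (hVlip (f a (π a) ω) (f b (π b) ω))).1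
  have hstep := mul_le_mul_of_nonneg_left (l1norm_closedLoop_sub_le hLf hflip hπlip a b ω) hLV
  linarith

end ClosedLoop

theorem stmt13_general {n m : ℕ} {Nsp : Type*} [MeasurableSpace Nsp]
    (d : Measure Nsp) [IsProbabilityMeasure d]
    (Xset Xtil : Set (Fin n → ℝ))
    (f : (Fin n → ℝ) → (Fin m → ℝ) → Nsp → (Fin n → ℝ))
    (π : (Fin n → ℝ) → (Fin m → ℝ)) (V : (Fin n → ℝ) → ℝ)
    (Lf Lπ LV τ K M : ℝ) (hLf : 0 < Lf) (hLπ : 0 < Lπ) (hLV : 0 < LV)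
    (hmesh : ∀ x ∈ Xset, ∃ xt ∈ Xtil, l1norm (x - xt) ≤ τ)
    (hVlip : ∀ a b, |V a - V b| ≤ LV * l1norm (a - b))
    (hflip : ∀ a b u v, ∀ ω : Nsp,
      l1norm (f a u ω - f b v ω) ≤ Lf * (l1norm (a - b) + l1norm (u - v)))
    (hπlip : ∀ a b, l1norm (π a - π b) ≤ Lπ * l1norm (a - b))
    (hK : K = LV * (Lf * (Lπ + 1) + 1))
    (hint : ∀ x : Fin n → ℝ, Integrable (fun ω => V (f x (π x) ω)) d)
    (hcheck : ∀ xt ∈ Xtil, (∃ x ∈ Xset, l1norm (x - xt) ≤ τ ∧ M ≤ V x) →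
      ∫ ω, V (f xt (π xt) ω) ∂d < V xt - τ * K) :
    ∀ x ∈ Xset, M ≤ V x → ∫ ω, V (f x (π x) ω) ∂d < V x := by
  intro x hx hM
  obtain ⟨xt, hxt, hdist⟩ := hmesh x hx
  have hstep := integral_closedLoop_le d hLf.le hLV.le hVlip hflip hπlip hint x xt
  have hstep_τ : LV * (Lf * (Lπ + 1)) * l1norm (x - xt) ≤ LV * (Lf * (Lπ + 1)) * τ := by
    gcongr
  have hgrid := hcheck xt hxt ⟨x, hx, hdist, hM⟩
  have hVxt : V xt ≤ V x + LV * τ := by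
    have h := (abs_sub_le_iff.mp (hVlip xt x)).1
    rw [l1norm_sub_comm] at h
    linarith [mul_le_mul_of_nonneg_left hdist hLV.le]
  rw [hK] at hgrid
  linarith

/-- Soundness of the verifier's discretized check: if the strict inequality
`E[V(f(x̃,π(x̃),ω))] < V(x̃) − τ·K` holds at every discretization point `x̃` whose `τ`-ball
contains a state with `V ≥ M`, then `E[V(f(x,π(x),ω))] < V(x)` at every state `x` with
`V(x) ≥ M`. -/
theorem stmt13 {n m : ℕ} {Nsp : Type*} [MeasurableSpace Nsp]
    (d : Measure Nsp) [IsProbabilityMeasure d]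
    (Xset Xtil : Set (Fin n → ℝ)) (hfin : Xtil.Finite) (hsub : Xtil ⊆ Xset)
    (f : (Fin n → ℝ) → (Fin m → ℝ) → Nsp → (Fin n → ℝ))
    (π : (Fin n → ℝ) → (Fin m → ℝ)) (V : (Fin n → ℝ) → ℝ)
    (Lf Lπ LV τ K M : ℝ) (hLf : 0 < Lf) (hLπ : 0 < Lπ) (hLV : 0 < LV) (hτ : 0 < τ)
    (hmesh : ∀ x ∈ Xset, ∃ xt ∈ Xtil, l1norm (x - xt) ≤ τ)
    (hVlip : ∀ a b, |V a - V b| ≤ LV * l1norm (a - b))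
    (hflip : ∀ a b u v, ∀ ω : Nsp,
      l1norm (f a u ω - f b v ω) ≤ Lf * (l1norm (a - b) + l1norm (u - v)))
    (hπlip : ∀ a b, l1norm (π a - π b) ≤ Lπ * l1norm (a - b))
    (hK : K = LV * (Lf * (Lπ + 1) + 1))
    (hint : ∀ x : Fin n → ℝ, Integrable (fun ω => V (f x (π x) ω)) d)
    (hcheck : ∀ xt ∈ Xtil, (∃ x ∈ Xset, l1norm (x - xt) ≤ τ ∧ M ≤ V x) →
      ∫ ω, V (f xt (π xt) ω) ∂d < V xt - τ * K) :
    ∀ x ∈ Xset, M ≤ V x → ∫ ω, V (f x (π x) ω) ∂d < V x :=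
  stmt13_general d Xset Xtil f π V Lf Lπ LV τ K M hLf hLπ hLV hmesh hVlip hflip hπlip hK hint hcheck
end
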